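/- If U ~ N(0, σ²I_d) is independent of the discrete random variable X on ℝ^d which takes at least two distinct values with positive probability, then MI(X; X + U) > 0 for every σ > 0, and MI(X; X + U) → H(X) as σ → 0, where H(X) is the Shannon entropy of X. -/

import Mathlib

open MeasureTheory Real Matrix Filter

/-- Multivariate Gaussian density `N(z; m, S)` on `ℝ^d`. -/
noncomputable def gaussDensity (d : ℕ) (m : Fin d → ℝ) (S : Matrix (Fin d) (Fin d) ℝ)
    (z : Fin d → ℝ) : ℝ :=
  (2 * π) ^ (-(d : ℝ) / 2) * S.det ^ (-(1 : ℝ) / 2) *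
    Real.exp (-(1 / 2) * ((z - m) ⬝ᵥ (S⁻¹ *ᵥ (z - m))))

/-- Differential entropy `h(p) = -∫ p log p` of a density on `ℝ^d`. -/
noncomputable def diffEntropy (d : ℕ) (p : (Fin d → ℝ) → ℝ) : ℝ :=
  - ∫ z, p z * Real.log (p z)

/-- Mutual information `MI(X; X + U)` for discrete `X` (values `x i`, weights `ω i`)
and independent isotropic Gaussian noise `U ~ N(0, σ²I)`: the mixture entropy minus
the weighted component entropies. -/
noncomputable def constNoiseMI (d n : ℕ) (x : Fin n → (Fin d → ℝ)) (ω : Fin n → ℝ)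
    (σ : ℝ) : ℝ :=
  diffEntropy d (fun z => ∑ i, ω i * gaussDensity d (x i) (σ ^ 2 • (1 : Matrix (Fin d) (Fin d) ℝ)) z) -
    ∑ i, ω i * diffEntropy d (gaussDensity d (x i) (σ ^ 2 • (1 : Matrix (Fin d) (Fin d) ℝ)))

/-!
Write `gᵢ` for the density of `N(xᵢ, σ²I)` and `p = ∑ᵢ ωᵢ gᵢ` for that of `X + U`. Then
`MI(X; X + U) = ∑ᵢ ωᵢ KL(gᵢ ‖ p) = H(X) - H(X | X + U)`.

Every `KL(gᵢ ‖ p)` is positive since `p ≠ gᵢ`: at `xᵢ` the mixture is strictly below the peak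
of `gᵢ` as soon as `X` takes a second value.

For the limit, the pointwise inequality `aᵢ log (∑ⱼ aⱼ / aᵢ) ≤ 2 (∑ⱼ √(aᵢ aⱼ) - aᵢ)` with
`aⱼ = ωⱼ gⱼ` bounds `0 ≤ H(X | X + U) ≤ 2 (∑ᵢⱼ √(ωᵢ ωⱼ) ∫ √(gᵢ gⱼ) - 1)`, and the Bhattacharyya
coefficients `∫ √(gᵢ gⱼ) = exp (-|xᵢ - xⱼ|² / 8σ²)` tend to `δᵢⱼ` as `σ → 0`.
-/

lemma mul_log_sum_div_le {ι : Type*} {s : Finset ι} {a : ι → ℝ} {i : ι}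
    (ha : ∀ j ∈ s, 0 ≤ a j) (hi : i ∈ s) (hai : 0 < a i) :
    a i * log ((∑ j ∈ s, a j) / a i) ≤ 2 * (∑ j ∈ s, √(a i * a j) - a i) := by
  set S := ∑ j ∈ s, √(a i * a j)
  have hS : a i ≤ S := by
    simpa [sqrt_mul_self hai.le] using
      Finset.single_le_sum (f := fun j => √(a i * a j)) (fun j _ => sqrt_nonneg _) hi
  have hsum : a i * ∑ j ∈ s, a j ≤ S ^ 2 :=
    calc a i * ∑ j ∈ s, a j = ∑ j ∈ s, √(a i * a j) ^ 2 := by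
          rw [Finset.mul_sum]
          exact Finset.sum_congr rfl fun j hj => (sq_sqrt (mul_nonneg hai.le (ha j hj))).symm
      _ ≤ S ^ 2 := Finset.sum_sq_le_sq_sum_of_nonneg fun j _ => sqrt_nonneg _
  have hpos : 0 < ∑ j ∈ s, a j := hai.trans_le (Finset.single_le_sum ha hi)
  calc a i * log ((∑ j ∈ s, a j) / a i) ≤ a i * log ((S / a i) ^ 2) := by
        gcongr
        rw [div_pow, le_div_iff₀ (by positivity), sq, ← mul_assoc, div_mul_cancel₀ _ hai.ne',
          mul_comm]
        exact hsum
    _ = 2 * (a i * log (S / a i)) := by rw [log_pow]; push_cast; ring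
    _ ≤ 2 * (a i * (S / a i - 1)) := by
        gcongr; exact log_le_sub_one_of_pos (div_pos (hai.trans_le hS) hai)
    _ = 2 * (S - a i) := by field_simp

lemma mul_exp_neg_mul_le {b : ℝ} (hb : 0 < b) (t : ℝ) :
    t * exp (-b * t) ≤ 2 / b * exp (-(b / 2) * t) := by
  have ht : t ≤ 2 / b * exp (b / 2 * t) := by
    rw [div_mul_eq_mul_div, le_div_iff₀ hb]
    nlinarith [add_one_le_exp (b / 2 * t)]
  calc t * exp (-b * t) ≤ 2 / b * exp (b / 2 * t) * exp (-b * t) := by gcongr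
    _ = 2 / b * exp (-(b / 2) * t) := by rw [mul_assoc, ← exp_add]; ring_nf

lemma dotProduct_sub_self_add_dotProduct_sub_self {ι : Type*} [Fintype ι] (z a b : ι → ℝ) :
    (z - a) ⬝ᵥ (z - a) + (z - b) ⬝ᵥ (z - b) =
      2 * ((z - (2 : ℝ)⁻¹ • (a + b)) ⬝ᵥ (z - (2 : ℝ)⁻¹ • (a + b))) +
        (2 : ℝ)⁻¹ * ((a - b) ⬝ᵥ (a - b)) := by
  simp only [dotProduct, Finset.mul_sum, ← Finset.sum_add_distrib]
  refine Finset.sum_congr rfl fun k _ => ?_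
  simp only [Pi.sub_apply, Pi.smul_apply, Pi.add_apply, smul_eq_mul]
  ring

open InformationTheory in
lemma integral_mul_log_div_pos {α : Type*} [TopologicalSpace α] [MeasurableSpace α]
    {μ : Measure α} [μ.IsOpenPosMeasure] {f g : α → ℝ} (hf : Continuous f) (hg : Continuous g)
    (hf0 : ∀ z, 0 ≤ f z) (hg0 : ∀ z, 0 < g z) (hfi : Integrable f μ) (hgi : Integrable g μ)
    (hfg : Integrable (fun z => f z * log (f z / g z)) μ) (hint : ∫ z, f z ∂μ = ∫ z, g z ∂μ)
    {z₀ : α} (hz₀ : f z₀ ≠ g z₀) : 0 < ∫ z, f z * log (f z / g z) ∂μ := by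
  have hkl : ∀ z, f z * log (f z / g z) =
      g z * klFun (f z / g z) + (f z - g z) := fun z => by
    have := (hg0 z).ne'
    rw [klFun_apply]; field_simp; ring
  have hkli : Integrable (fun z => g z * klFun (f z / g z)) μ :=
    (hfg.sub (hfi.sub hgi)).congr <| Eventually.of_forall fun z => by
      simp only [Pi.sub_apply, hkl]; ring
  simp_rw [hkl]
  rw [integral_add (g := fun z => f z - g z) hkli (hfi.sub hgi), integral_sub hfi hgi, hint,
    sub_self, add_zero]
  refine integral_pos_of_integrable_nonneg_nonzero
    (hg.mul (continuous_klFun.comp (hf.div hg fun z => (hg0 z).ne'))) hkli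
    (fun z => mul_nonneg (hg0 z).le (klFun_nonneg (div_nonneg (hf0 z) (hg0 z).le)))
    (x := z₀) (mul_ne_zero (hg0 z₀).ne' ?_)
  rw [Ne, klFun_eq_zero_iff (div_nonneg (hf0 z₀) (hg0 z₀).le),
    div_eq_one_iff_eq (hg0 z₀).ne']
  exact hz₀

lemma tendsto_exp_neg_div_sq_nhdsGT_zero {c : ℝ} (hc : 0 < c) :
    Tendsto (fun σ : ℝ => exp (-c / σ ^ 2)) (nhdsWithin 0 (Set.Ioi 0)) (nhds 0) := by
  have h : Tendsto (fun σ : ℝ => c * (σ⁻¹ * σ⁻¹)) (nhdsWithin 0 (Set.Ioi 0)) atTop :=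
    (tendsto_inv_nhdsGT_zero.atTop_mul_atTop₀ tendsto_inv_nhdsGT_zero).const_mul_atTop hc
  refine (tendsto_exp_atBot.comp (tendsto_neg_atTop_atBot.comp h)).congr fun σ => ?_
  simp only [Function.comp_apply]
  ring_nf

section GaussianIntegral

variable {d : ℕ}

lemma exp_neg_mul_dotProduct_self (b : ℝ) (v : Fin d → ℝ) :
    exp (-b * (v ⬝ᵥ v)) = ∏ k, exp (-b * v k ^ 2) := by
  simp only [← exp_sum, dotProduct, Finset.mul_sum, sq]

lemma integrable_exp_neg_mul_dotProduct_self {b : ℝ} (hb : 0 < b) (m : Fin d → ℝ) :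
    Integrable fun z : Fin d → ℝ => exp (-b * ((z - m) ⬝ᵥ (z - m))) := by
  have : Integrable fun v : Fin d → ℝ => exp (-b * (v ⬝ᵥ v)) := by
    simp_rw [exp_neg_mul_dotProduct_self]
    exact Integrable.fintype_prod fun _ => integrable_exp_neg_mul_sq hb
  exact this.comp_sub_right m

lemma integral_exp_neg_mul_dotProduct_self (b : ℝ) (m : Fin d → ℝ) :
    ∫ z : Fin d → ℝ, exp (-b * ((z - m) ⬝ᵥ (z - m))) = √(π / b) ^ d := by
  rw [integral_sub_right_eq_self (fun v => exp (-b * (v ⬝ᵥ v))) m]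
  simp_rw [exp_neg_mul_dotProduct_self]
  rw [volume_pi, integral_fintype_prod_eq_pow (fun y : ℝ => exp (-b * y ^ 2)), integral_gaussian,
    Fintype.card_fin]

lemma integrable_of_abs_le_mul_exp_neg_mul_dotProduct_self {f : (Fin d → ℝ) → ℝ}
    (hf : AEStronglyMeasurable f) {A B b : ℝ} (hB : 0 ≤ B) (hb : 0 < b) (m : Fin d → ℝ)
    (hbd : ∀ z, |f z| ≤ (A + B * ((z - m) ⬝ᵥ (z - m))) * exp (-b * ((z - m) ⬝ᵥ (z - m)))) :
    Integrable f := by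
  refine Integrable.mono' (g := fun z => A * exp (-b * ((z - m) ⬝ᵥ (z - m))) +
      B * (2 / b) * exp (-(b / 2) * ((z - m) ⬝ᵥ (z - m))))
    (((integrable_exp_neg_mul_dotProduct_self hb m).const_mul A).add
      ((integrable_exp_neg_mul_dotProduct_self (half_pos hb) m).const_mul (B * (2 / b)))) hf
    (Eventually.of_forall fun z => ?_)
  have := mul_exp_neg_mul_le hb ((z - m) ⬝ᵥ (z - m))
  calc ‖f z‖ ≤ (A + B * ((z - m) ⬝ᵥ (z - m))) * exp (-b * ((z - m) ⬝ᵥ (z - m))) := hbd z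
    _ ≤ _ := by rw [add_mul, mul_assoc B, mul_assoc B]; gcongr

end GaussianIntegral

noncomputable def gaussPeak (d : ℕ) (σ : ℝ) : ℝ := (√(2 * π * σ ^ 2) ^ d)⁻¹

noncomputable def isoGauss (d : ℕ) (σ : ℝ) (m z : Fin d → ℝ) : ℝ :=
  gaussPeak d σ * exp (-(2 * σ ^ 2)⁻¹ * ((z - m) ⬝ᵥ (z - m)))

section IsoGauss

variable {d : ℕ} {σ : ℝ}

lemma gaussDensity_smul_one (hσ : σ ≠ 0) (m : Fin d → ℝ) :
    gaussDensity d m (σ ^ 2 • (1 : Matrix (Fin d) (Fin d) ℝ)) = isoGauss d σ m := by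
  funext z
  have hσ2 : 0 < σ ^ 2 := by positivity
  have hinv : (σ ^ 2 • (1 : Matrix (Fin d) (Fin d) ℝ))⁻¹ = (σ ^ 2)⁻¹ • 1 :=
    inv_eq_right_inv (by rw [smul_mul_smul_comm, mul_inv_cancel₀ hσ2.ne', one_mul, one_smul])
  have hconst : (2 * π) ^ (-(d : ℝ) / 2) * ((σ ^ 2) ^ d) ^ (-(1 : ℝ) / 2) = gaussPeak d σ := by
    unfold gaussPeak
    generalize σ ^ 2 = t at hσ2 ⊢
    rw [sqrt_eq_rpow, ← rpow_natCast t, ← rpow_mul hσ2.le, ← rpow_natCast _ d,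
      ← rpow_mul (by positivity), mul_rpow (by positivity) hσ2.le, mul_inv,
      ← rpow_neg (by positivity), ← rpow_neg hσ2.le]
    ring_nf
  rw [gaussDensity, isoGauss, hinv, det_smul, det_one, mul_one, Fintype.card_fin, hconst,
    smul_mulVec, one_mulVec, dotProduct_smul, smul_eq_mul]
  ring_nf

lemma gaussPeak_nonneg (d : ℕ) (σ : ℝ) : 0 ≤ gaussPeak d σ := by
  unfold gaussPeak; positivity

lemma gaussPeak_pos (hσ : σ ≠ 0) : 0 < gaussPeak d σ := by
  unfold gaussPeak; positivity

lemma isoGauss_nonneg (σ : ℝ) (m z : Fin d → ℝ) : 0 ≤ isoGauss d σ m z :=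
  mul_nonneg (gaussPeak_nonneg d σ) (exp_pos _).le

lemma isoGauss_pos (hσ : σ ≠ 0) (m z : Fin d → ℝ) : 0 < isoGauss d σ m z :=
  mul_pos (gaussPeak_pos hσ) (exp_pos _)

lemma isoGauss_le (σ : ℝ) (m z : Fin d → ℝ) : isoGauss d σ m z ≤ gaussPeak d σ := by
  refine mul_le_of_le_one_right (gaussPeak_nonneg d σ) (exp_le_one_iff.2 ?_)
  have := dotProduct_star_self_nonneg (z - m)
  simp only [star_trivial] at this
  exact mul_nonpos_of_nonpos_of_nonneg (by simp; positivity) this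

lemma isoGauss_lt_of_ne (hσ : σ ≠ 0) {m z : Fin d → ℝ} (hmz : z ≠ m) :
    isoGauss d σ m z < gaussPeak d σ := by
  refine mul_lt_of_lt_one_right (gaussPeak_pos hσ) (exp_lt_one_iff.2 ?_)
  have := dotProduct_star_self_pos_iff.2 (sub_ne_zero.2 hmz)
  simp only [star_trivial] at this
  exact mul_neg_of_neg_of_pos (by simp; positivity) this

lemma isoGauss_self (m : Fin d → ℝ) : isoGauss d σ m m = gaussPeak d σ := by
  simp [isoGauss]

lemma continuous_isoGauss (σ : ℝ) (m : Fin d → ℝ) : Continuous (isoGauss d σ m) := by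
  unfold isoGauss dotProduct; fun_prop

lemma integrable_isoGauss (hσ : σ ≠ 0) (m : Fin d → ℝ) : Integrable (isoGauss d σ m) :=
  (integrable_exp_neg_mul_dotProduct_self (by positivity) m).const_mul _

lemma integral_isoGauss (hσ : σ ≠ 0) (m : Fin d → ℝ) : ∫ z, isoGauss d σ m z = 1 := by
  simp only [isoGauss, gaussPeak]
  rw [integral_const_mul, integral_exp_neg_mul_dotProduct_self, div_inv_eq_mul,
    show π * (2 * σ ^ 2) = 2 * π * σ ^ 2 by ring, inv_mul_cancel₀ (by positivity)]

lemma log_isoGauss (hσ : σ ≠ 0) (m z : Fin d → ℝ) :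
    log (isoGauss d σ m z) = log (gaussPeak d σ) - (2 * σ ^ 2)⁻¹ * ((z - m) ⬝ᵥ (z - m)) := by
  rw [isoGauss, log_mul (gaussPeak_pos hσ).ne' (exp_pos _).ne', log_exp]; ring

lemma integrable_isoGauss_mul (hσ : σ ≠ 0) (m : Fin d → ℝ) {f : (Fin d → ℝ) → ℝ}
    (hf : AEStronglyMeasurable f) {A B : ℝ} (hB : 0 ≤ B)
    (hbd : ∀ z, |f z| ≤ A + B * ((z - m) ⬝ᵥ (z - m))) :
    Integrable fun z => isoGauss d σ m z * f z := by
  refine integrable_of_abs_le_mul_exp_neg_mul_dotProduct_self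
    ((continuous_isoGauss σ m).aestronglyMeasurable.mul hf) (A := gaussPeak d σ * A)
    (B := gaussPeak d σ * B) (mul_nonneg (gaussPeak_nonneg d σ) hB)
    (by positivity : 0 < (2 * σ ^ 2)⁻¹) m fun z => ?_
  rw [abs_mul, abs_of_pos (isoGauss_pos hσ m z), isoGauss, mul_right_comm, mul_assoc _ B,
    ← mul_add]
  exact mul_le_mul_of_nonneg_right (mul_le_mul_of_nonneg_left (hbd z) (gaussPeak_nonneg d σ))
    (exp_pos _).le

lemma integrable_isoGauss_mul_log_isoGauss (hσ : σ ≠ 0) (m : Fin d → ℝ) :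
    Integrable fun z => isoGauss d σ m z * log (isoGauss d σ m z) := by
  refine integrable_isoGauss_mul hσ m
    ((continuous_isoGauss σ m).log fun z => (isoGauss_pos hσ m z).ne').aestronglyMeasurable
    (A := |log (gaussPeak d σ)|) (by positivity : 0 ≤ (2 * σ ^ 2)⁻¹) fun z => ?_
  have hq := dotProduct_star_self_nonneg (z - m)
  simp only [star_trivial] at hq
  rw [log_isoGauss hσ]
  refine (abs_sub _ _).trans ?_
  rw [abs_of_nonneg (by positivity : 0 ≤ (2 * σ ^ 2)⁻¹ * ((z - m) ⬝ᵥ (z - m)))]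

lemma sqrt_isoGauss_mul_isoGauss (a b z : Fin d → ℝ) :
    √(isoGauss d σ a z * isoGauss d σ b z) =
      exp (-(8 * σ ^ 2)⁻¹ * ((a - b) ⬝ᵥ (a - b))) * isoGauss d σ ((2 : ℝ)⁻¹ • (a + b)) z := by
  rw [← sqrt_sq (mul_nonneg (exp_pos _).le (isoGauss_nonneg σ _ z))]
  congr 1
  have hexp : -(2 * σ ^ 2)⁻¹ * ((z - a) ⬝ᵥ (z - a)) + -(2 * σ ^ 2)⁻¹ * ((z - b) ⬝ᵥ (z - b)) =
      2 * (-(8 * σ ^ 2)⁻¹ * ((a - b) ⬝ᵥ (a - b)) +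
        -(2 * σ ^ 2)⁻¹ * ((z - (2 : ℝ)⁻¹ • (a + b)) ⬝ᵥ (z - (2 : ℝ)⁻¹ • (a + b)))) := by
    linear_combination (-(2 * σ ^ 2)⁻¹) * dotProduct_sub_self_add_dotProduct_sub_self z a b
  simp only [isoGauss]
  have hsq : ∀ y : ℝ, exp (2 * y) = exp y ^ 2 := fun y => by rw [sq, ← exp_add, two_mul]
  rw [mul_mul_mul_comm, ← exp_add, hexp, hsq, exp_add]
  ring

lemma integrable_sqrt_isoGauss_mul_isoGauss (hσ : σ ≠ 0) (a b : Fin d → ℝ) :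
    Integrable fun z => √(isoGauss d σ a z * isoGauss d σ b z) := by
  simp_rw [sqrt_isoGauss_mul_isoGauss]
  exact (integrable_isoGauss hσ _).const_mul _

lemma integral_sqrt_isoGauss_mul_isoGauss (hσ : σ ≠ 0) (a b : Fin d → ℝ) :
    ∫ z, √(isoGauss d σ a z * isoGauss d σ b z) = exp (-(8 * σ ^ 2)⁻¹ * ((a - b) ⬝ᵥ (a - b))) := by
  simp_rw [sqrt_isoGauss_mul_isoGauss]
  rw [integral_const_mul, integral_isoGauss hσ, mul_one]

end IsoGauss

noncomputable def gaussMixture {ι : Type*} [Fintype ι] (d : ℕ) (x : ι → Fin d → ℝ) (ω : ι → ℝ)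
    (σ : ℝ) (z : Fin d → ℝ) : ℝ :=
  ∑ i, ω i * isoGauss d σ (x i) z

/-- The conditional entropy `H(X | X + U)`. -/
noncomputable def equivocation {ι : Type*} [Fintype ι] (d : ℕ) (x : ι → Fin d → ℝ) (ω : ι → ℝ)
    (σ : ℝ) : ℝ :=
  ∑ i, ω i * ∫ z, isoGauss d σ (x i) z *
    log (gaussMixture d x ω σ z / (ω i * isoGauss d σ (x i) z))

/-- `∑ᵢⱼ √(ωᵢ ωⱼ) ∫ √(gᵢ gⱼ)`, where `gᵢ` is the density of `N(xᵢ, σ²I)`. -/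
noncomputable def mixtureAffinity {ι : Type*} [Fintype ι] (d : ℕ) (x : ι → Fin d → ℝ)
    (ω : ι → ℝ) (σ : ℝ) : ℝ :=
  ∑ i, ∑ j, √(ω i * ω j) * exp (-(8 * σ ^ 2)⁻¹ * ((x i - x j) ⬝ᵥ (x i - x j)))

section Mixture

variable {ι : Type*} [Fintype ι] {d : ℕ} {x : ι → Fin d → ℝ} {ω : ι → ℝ} {σ : ℝ}

lemma mul_isoGauss_le_gaussMixture (hω : ∀ j, 0 ≤ ω j) (i : ι) (z : Fin d → ℝ) :
    ω i * isoGauss d σ (x i) z ≤ gaussMixture d x ω σ z :=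
  Finset.single_le_sum (f := fun j => ω j * isoGauss d σ (x j) z)
    (fun j _ => mul_nonneg (hω j) (isoGauss_nonneg σ _ z)) (Finset.mem_univ i)

lemma gaussMixture_pos (hσ : σ ≠ 0) (hω : ∀ j, 0 < ω j) (i : ι) (z : Fin d → ℝ) :
    0 < gaussMixture d x ω σ z :=
  (mul_pos (hω i) (isoGauss_pos hσ _ z)).trans_le
    (mul_isoGauss_le_gaussMixture (fun j => (hω j).le) i z)

lemma gaussMixture_le (hω : ∀ j, 0 ≤ ω j) (hsum : ∑ j, ω j = 1) (z : Fin d → ℝ) :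
    gaussMixture d x ω σ z ≤ gaussPeak d σ :=
  calc gaussMixture d x ω σ z ≤ ∑ j, ω j * gaussPeak d σ :=
        Finset.sum_le_sum fun j _ => mul_le_mul_of_nonneg_left (isoGauss_le σ _ z) (hω j)
    _ = gaussPeak d σ := by rw [← Finset.sum_mul, hsum, one_mul]

lemma gaussMixture_lt_isoGauss_self (hσ : σ ≠ 0) (hω : ∀ j, 0 < ω j) (hsum : ∑ j, ω j = 1)
    {i j : ι} (hji : x j ≠ x i) : gaussMixture d x ω σ (x i) < isoGauss d σ (x i) (x i) :=
  calc gaussMixture d x ω σ (x i) < ∑ k, ω k * gaussPeak d σ :=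
        Finset.sum_lt_sum (fun k _ => mul_le_mul_of_nonneg_left (isoGauss_le σ _ _) (hω k).le)
          ⟨j, Finset.mem_univ j, mul_lt_mul_of_pos_left (isoGauss_lt_of_ne hσ hji.symm) (hω j)⟩
    _ = isoGauss d σ (x i) (x i) := by rw [← Finset.sum_mul, hsum, one_mul, isoGauss_self]

lemma continuous_gaussMixture (σ : ℝ) : Continuous (gaussMixture d x ω σ) :=
  continuous_finsetSum _ fun i _ => continuous_const.mul (continuous_isoGauss σ (x i))

lemma integrable_gaussMixture (hσ : σ ≠ 0) : Integrable (gaussMixture d x ω σ) :=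
  integrable_finsetSum _ fun i _ => (integrable_isoGauss hσ (x i)).const_mul (ω i)

lemma integral_gaussMixture (hσ : σ ≠ 0) (hsum : ∑ j, ω j = 1) :
    ∫ z, gaussMixture d x ω σ z = 1 := by
  unfold gaussMixture
  rw [integral_finsetSum _ fun i _ => (integrable_isoGauss hσ (x i)).const_mul (ω i)]
  simp only [integral_const_mul, integral_isoGauss hσ, mul_one, hsum]

lemma abs_log_gaussMixture_le (hσ : σ ≠ 0) (hω : ∀ j, 0 < ω j) (hsum : ∑ j, ω j = 1) (i : ι)
    (z : Fin d → ℝ) :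
    |log (gaussMixture d x ω σ z)| ≤ |log (gaussPeak d σ)| + |log (ω i)| +
      (2 * σ ^ 2)⁻¹ * ((z - x i) ⬝ᵥ (z - x i)) := by
  have hp := gaussMixture_pos (x := x) hσ hω i z
  have hlower : log (ω i) + log (isoGauss d σ (x i) z) ≤ log (gaussMixture d x ω σ z) := by
    rw [← log_mul (hω i).ne' (isoGauss_pos hσ _ z).ne']
    exact log_le_log (mul_pos (hω i) (isoGauss_pos hσ _ z))
      (mul_isoGauss_le_gaussMixture (fun j => (hω j).le) i z)
  have hupper : log (gaussMixture d x ω σ z) ≤ log (gaussPeak d σ) :=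
    log_le_log hp (gaussMixture_le (fun j => (hω j).le) hsum z)
  rw [log_isoGauss hσ] at hlower
  rw [abs_le]
  constructor <;> linarith [neg_abs_le (log (ω i)), neg_abs_le (log (gaussPeak d σ)),
    le_abs_self (log (gaussPeak d σ)), abs_nonneg (log (ω i))]

lemma integrable_isoGauss_mul_log_gaussMixture (hσ : σ ≠ 0) (hω : ∀ j, 0 < ω j)
    (hsum : ∑ j, ω j = 1) (i : ι) :
    Integrable fun z => isoGauss d σ (x i) z * log (gaussMixture d x ω σ z) :=
  integrable_isoGauss_mul hσ (x i)
    ((continuous_gaussMixture σ).log fun z => (gaussMixture_pos hσ hω i z).ne').aestronglyMeasurable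
    (by positivity : 0 ≤ (2 * σ ^ 2)⁻¹) (abs_log_gaussMixture_le hσ hω hsum i)

lemma isoGauss_mul_log_div_gaussMixture (hσ : σ ≠ 0) (hω : ∀ j, 0 < ω j) (i : ι)
    (z : Fin d → ℝ) :
    isoGauss d σ (x i) z * log (isoGauss d σ (x i) z / gaussMixture d x ω σ z) =
      isoGauss d σ (x i) z * log (isoGauss d σ (x i) z) -
        isoGauss d σ (x i) z * log (gaussMixture d x ω σ z) := by
  rw [log_div (isoGauss_pos hσ _ z).ne' (gaussMixture_pos hσ hω i z).ne', mul_sub]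

lemma integrable_isoGauss_mul_log_div_gaussMixture (hσ : σ ≠ 0) (hω : ∀ j, 0 < ω j)
    (hsum : ∑ j, ω j = 1) (i : ι) :
    Integrable fun z =>
      isoGauss d σ (x i) z * log (isoGauss d σ (x i) z / gaussMixture d x ω σ z) := by
  simp_rw [isoGauss_mul_log_div_gaussMixture hσ hω i]
  exact (integrable_isoGauss_mul_log_isoGauss hσ (x i)).sub
    (integrable_isoGauss_mul_log_gaussMixture hσ hω hsum i)

lemma integral_isoGauss_mul_log_div_gaussMixture_pos (hσ : σ ≠ 0) (hω : ∀ j, 0 < ω j)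
    (hsum : ∑ j, ω j = 1) {i j : ι} (hji : x j ≠ x i) :
    0 < ∫ z, isoGauss d σ (x i) z * log (isoGauss d σ (x i) z / gaussMixture d x ω σ z) :=
  integral_mul_log_div_pos (continuous_isoGauss σ (x i)) (continuous_gaussMixture σ)
    (isoGauss_nonneg σ (x i)) (gaussMixture_pos hσ hω i) (integrable_isoGauss hσ (x i))
    (integrable_gaussMixture hσ) (integrable_isoGauss_mul_log_div_gaussMixture hσ hω hsum i)
    (by rw [integral_isoGauss hσ, integral_gaussMixture hσ hsum])
    (gaussMixture_lt_isoGauss_self hσ hω hsum hji).ne'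

lemma isoGauss_mul_log_gaussMixture_div (hσ : σ ≠ 0) (hω : ∀ j, 0 < ω j) (i : ι)
    (z : Fin d → ℝ) :
    isoGauss d σ (x i) z * log (gaussMixture d x ω σ z / (ω i * isoGauss d σ (x i) z)) =
      -log (ω i) * isoGauss d σ (x i) z -
        isoGauss d σ (x i) z * log (isoGauss d σ (x i) z / gaussMixture d x ω σ z) := by
  have hg := isoGauss_pos hσ (x i) z
  have hp := gaussMixture_pos (x := x) hσ hω i z
  rw [log_div hp.ne' (mul_pos (hω i) hg).ne', log_mul (hω i).ne' hg.ne', log_div hg.ne' hp.ne']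
  ring

lemma integrable_isoGauss_mul_log_gaussMixture_div (hσ : σ ≠ 0) (hω : ∀ j, 0 < ω j)
    (hsum : ∑ j, ω j = 1) (i : ι) :
    Integrable fun z =>
      isoGauss d σ (x i) z * log (gaussMixture d x ω σ z / (ω i * isoGauss d σ (x i) z)) := by
  simp_rw [isoGauss_mul_log_gaussMixture_div hσ hω i]
  exact ((integrable_isoGauss hσ (x i)).const_mul _).sub
    (integrable_isoGauss_mul_log_div_gaussMixture hσ hω hsum i)

lemma integral_isoGauss_mul_log_div_gaussMixture_eq (hσ : σ ≠ 0) (hω : ∀ j, 0 < ω j)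
    (hsum : ∑ j, ω j = 1) (i : ι) :
    ∫ z, isoGauss d σ (x i) z * log (isoGauss d σ (x i) z / gaussMixture d x ω σ z) =
      -log (ω i) - ∫ z, isoGauss d σ (x i) z *
        log (gaussMixture d x ω σ z / (ω i * isoGauss d σ (x i) z)) := by
  simp_rw [isoGauss_mul_log_gaussMixture_div hσ hω i]
  rw [integral_sub ((integrable_isoGauss hσ (x i)).const_mul _)
    (integrable_isoGauss_mul_log_div_gaussMixture hσ hω hsum i), integral_const_mul,
    integral_isoGauss hσ]
  ring

lemma equivocation_nonneg (hσ : σ ≠ 0) (hω : ∀ j, 0 < ω j) : 0 ≤ equivocation d x ω σ :=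
  Finset.sum_nonneg fun i _ => mul_nonneg (hω i).le <| integral_nonneg fun z =>
    mul_nonneg (isoGauss_nonneg σ _ z) <| log_nonneg <|
      (one_le_div (mul_pos (hω i) (isoGauss_pos hσ _ z))).2
        (mul_isoGauss_le_gaussMixture (fun j => (hω j).le) i z)

lemma equivocation_le (hσ : σ ≠ 0) (hω : ∀ j, 0 < ω j) (hsum : ∑ j, ω j = 1) :
    equivocation d x ω σ ≤ 2 * (mixtureAffinity d x ω σ - 1) := by
  rw [equivocation, mixtureAffinity, ← hsum, ← Finset.sum_sub_distrib, Finset.mul_sum]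
  refine Finset.sum_le_sum fun i _ => ?_
  have hpt : ∀ z, ω i * (isoGauss d σ (x i) z *
      log (gaussMixture d x ω σ z / (ω i * isoGauss d σ (x i) z))) ≤
      2 * (∑ j, √(ω i * ω j) * √(isoGauss d σ (x i) z * isoGauss d σ (x j) z) -
        ω i * isoGauss d σ (x i) z) := fun z => by
    have := mul_log_sum_div_le (s := Finset.univ) (a := fun j => ω j * isoGauss d σ (x j) z)
      (fun j _ => mul_nonneg (hω j).le (isoGauss_nonneg σ _ z)) (Finset.mem_univ i)
      (mul_pos (hω i) (isoGauss_pos hσ _ z))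
    simp only [mul_mul_mul_comm (ω i), sqrt_mul (mul_nonneg (hω i).le (hω _).le)] at this
    rw [← mul_assoc]
    exact this
  calc ω i * ∫ z, isoGauss d σ (x i) z *
        log (gaussMixture d x ω σ z / (ω i * isoGauss d σ (x i) z))
      ≤ ∫ z, 2 * (∑ j, √(ω i * ω j) * √(isoGauss d σ (x i) z * isoGauss d σ (x j) z) -
          ω i * isoGauss d σ (x i) z) := by
        rw [← integral_const_mul]
        refine integral_mono
          ((integrable_isoGauss_mul_log_gaussMixture_div hσ hω hsum i).const_mul _)
          (Integrable.const_mul (Integrable.sub (integrable_finsetSum _ fun j _ =>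
            (integrable_sqrt_isoGauss_mul_isoGauss hσ _ _).const_mul _)
            ((integrable_isoGauss hσ _).const_mul _)) _) hpt
    _ = 2 * (∑ j, √(ω i * ω j) * exp (-(8 * σ ^ 2)⁻¹ * ((x i - x j) ⬝ᵥ (x i - x j))) - ω i) := by
        rw [integral_const_mul, integral_sub (integrable_finsetSum _ fun j _ =>
            (integrable_sqrt_isoGauss_mul_isoGauss hσ _ _).const_mul _)
            ((integrable_isoGauss hσ _).const_mul _),
          integral_finsetSum _ fun j _ =>
            (integrable_sqrt_isoGauss_mul_isoGauss hσ _ _).const_mul _]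
        simp only [integral_const_mul, integral_sqrt_isoGauss_mul_isoGauss hσ, integral_isoGauss hσ,
          mul_one]

lemma tendsto_mixtureAffinity (hω : ∀ j, 0 ≤ ω j) (hsum : ∑ j, ω j = 1)
    (hx : Function.Injective x) :
    Tendsto (mixtureAffinity d x ω) (nhdsWithin 0 (Set.Ioi 0)) (nhds 1) := by
  classical
  rw [← hsum]
  refine tendsto_finsetSum _ fun i _ => ?_
  have hterm : ∀ j, Tendsto (fun σ => √(ω i * ω j) *
      exp (-(8 * σ ^ 2)⁻¹ * ((x i - x j) ⬝ᵥ (x i - x j))))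
      (nhdsWithin 0 (Set.Ioi 0)) (nhds (if i = j then ω i else 0)) := fun j => by
    split_ifs with hij
    · subst hij
      simp [sqrt_mul_self (hω i)]
    · have hpos : 0 < (x i - x j) ⬝ᵥ (x i - x j) := by
        simpa using dotProduct_star_self_pos_iff.2 (sub_ne_zero.2 (hx.ne hij))
      have := (tendsto_exp_neg_div_sq_nhdsGT_zero
        (div_pos hpos (by norm_num : (0 : ℝ) < 8))).const_mul √(ω i * ω j)
      rw [mul_zero] at this
      refine this.congr fun σ => ?_
      congr 2
      ring
  simpa using tendsto_finsetSum Finset.univ fun j _ => hterm j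

lemma tendsto_equivocation (hω : ∀ j, 0 < ω j) (hsum : ∑ j, ω j = 1)
    (hx : Function.Injective x) :
    Tendsto (equivocation d x ω) (nhdsWithin 0 (Set.Ioi 0)) (nhds 0) := by
  have hupper := ((tendsto_mixtureAffinity (fun j => (hω j).le) hsum hx).sub_const 1).const_mul 2
  rw [sub_self, mul_zero] at hupper
  refine tendsto_of_tendsto_of_tendsto_of_le_of_le' tendsto_const_nhds hupper ?_ ?_ <;>
    filter_upwards [self_mem_nhdsWithin] with σ (hσ : 0 < σ)
  exacts [equivocation_nonneg hσ.ne' hω, equivocation_le hσ.ne' hω hsum]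

end Mixture

lemma constNoiseMI_eq_sum {d n : ℕ} {x : Fin n → Fin d → ℝ} {ω : Fin n → ℝ} {σ : ℝ}
    (hσ : σ ≠ 0) (hω : ∀ j, 0 < ω j) (hsum : ∑ j, ω j = 1) :
    constNoiseMI d n x ω σ =
      ∑ i, ω i * ∫ z, isoGauss d σ (x i) z *
        log (isoGauss d σ (x i) z / gaussMixture d x ω σ z) := by
  have hmix : ∀ z, gaussMixture d x ω σ z * log (gaussMixture d x ω σ z) =
      ∑ i, ω i * (isoGauss d σ (x i) z * log (gaussMixture d x ω σ z)) := fun z => by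
    show (∑ i, ω i * isoGauss d σ (x i) z) * _ = _
    simp only [Finset.sum_mul, mul_assoc]
  simp only [constNoiseMI, gaussDensity_smul_one hσ]
  change diffEntropy d (gaussMixture d x ω σ) - _ = _
  have hdiv : ∀ i, ∫ z, isoGauss d σ (x i) z *
      log (isoGauss d σ (x i) z / gaussMixture d x ω σ z) =
      (∫ z, isoGauss d σ (x i) z * log (isoGauss d σ (x i) z)) -
        ∫ z, isoGauss d σ (x i) z * log (gaussMixture d x ω σ z) := fun i => by
    simp_rw [isoGauss_mul_log_div_gaussMixture hσ hω i]
    exact integral_sub (integrable_isoGauss_mul_log_isoGauss hσ (x i))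
      (integrable_isoGauss_mul_log_gaussMixture hσ hω hsum i)
  simp only [diffEntropy, hmix, hdiv]
  rw [integral_finsetSum _ fun i _ =>
    (integrable_isoGauss_mul_log_gaussMixture hσ hω hsum i).const_mul _]
  simp only [integral_const_mul, mul_sub, mul_neg, Finset.sum_sub_distrib, Finset.sum_neg_distrib]
  ring

lemma constNoiseMI_eq_entropy_sub_equivocation {d n : ℕ} {x : Fin n → Fin d → ℝ}
    {ω : Fin n → ℝ} {σ : ℝ} (hσ : σ ≠ 0) (hω : ∀ j, 0 < ω j) (hsum : ∑ j, ω j = 1) :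
    constNoiseMI d n x ω σ = -∑ i, ω i * log (ω i) - equivocation d x ω σ := by
  simp only [constNoiseMI_eq_sum hσ hω hsum,
    integral_isoGauss_mul_log_div_gaussMixture_eq hσ hω hsum, equivocation, mul_sub,
    Finset.sum_sub_distrib, mul_neg, Finset.sum_neg_distrib]

/-- for a discrete `X` taking at least two distinct values with positive
probability and independent noise `U ~ N(0, σ²I)`, `MI(X; X + U) > 0` for every
`σ > 0`, and `MI(X; X + U) → H(X) = −∑ ω i log ω i` as `σ → 0⁺`. -/
theorem const_gaussian_noise_mi
    (d n : ℕ) (hn : 2 ≤ n) (x : Fin n → (Fin d → ℝ)) (hx : Function.Injective x)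
    (ω : Fin n → ℝ) (hω : ∀ i, 0 < ω i) (hsum : ∑ i, ω i = 1) :
    (∀ σ : ℝ, 0 < σ → 0 < constNoiseMI d n x ω σ) ∧
      Tendsto (constNoiseMI d n x ω) (nhdsWithin 0 (Set.Ioi 0))
        (nhds (-∑ i, ω i * Real.log (ω i))) := by
  refine ⟨fun σ hσ => ?_, ?_⟩
  · rw [constNoiseMI_eq_sum hσ.ne' hω hsum]
    refine Finset.sum_pos (fun i _ => mul_pos (hω i) ?_)
      (Finset.univ_nonempty_iff.2 ⟨⟨0, by omega⟩⟩)
    obtain ⟨j, hji⟩ := Fintype.exists_ne_of_one_lt_card (by rw [Fintype.card_fin]; omega) i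
    exact integral_isoGauss_mul_log_div_gaussMixture_pos hσ.ne' hω hsum (hx.ne hji)
  · have h := (tendsto_equivocation hω hsum hx).const_sub (-∑ i, ω i * log (ω i))
    rw [sub_zero] at h
    refine h.congr' ?_
    filter_upwards [self_mem_nhdsWithin] with σ (hσ : 0 < σ)
    exact (constNoiseMI_eq_entropy_sub_equivocation hσ.ne' hω hsum).symm
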